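/- arXiv:1309.2835 — 3 statements merged into one kernel-verified Lean document; each statement's English description precedes it below -/
import Mathlib

section
/- Let K be a field, C a coassociative counital K-coalgebra, and {M_i}_{i∈I} a family of left C-comodules. Let P = ∏_{i∈I} M_i be the product of the underlying K-vector spaces with projections π_i : P → M_i. Then there exists a unique maximal K-subspace D ⊆ P which carries a left C-comodule structure such that each restriction π_i|_D : D → M_i is a comodule morphism, and (D, {π_i|_D}_{i∈I}) is the product of the family {M_i}_{i∈I} in the category of left C-comodules. -/
open TensorProduct

universe u v w w'

/-- A left comodule structure (coaction) over a coalgebra `C` on a module `V`: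
a linear map `ρ : V → C ⊗ V` satisfying the coassociativity and counit axioms. -/
structure Coaction (K : Type u) (C : Type v) (V : Type w) [CommSemiring K]
    [AddCommMonoid C] [Module K C] [Coalgebra K C] [AddCommMonoid V] [Module K V] where
  ρ : V →ₗ[K] C ⊗[K] V
  coassoc : LinearMap.rTensor V (Coalgebra.comul (R := K) (A := C)) ∘ₗ ρ =
    (TensorProduct.assoc K C C V).symm.toLinearMap ∘ₗ LinearMap.lTensor C ρ ∘ₗ ρ
  counit : (TensorProduct.lid K V).toLinearMap ∘ₗ
      LinearMap.rTensor V (Coalgebra.counit (R := K) (A := C)) ∘ₗ ρ = LinearMap.id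

/-- A linear map `f : V → W` is a morphism of left `C`-comodules (w.r.t. the given
coactions) if it commutes with the coactions. -/
def IsComodHom {K : Type u} {C : Type v} {V : Type w} {W : Type w'} [CommSemiring K]
    [AddCommMonoid C] [Module K C] [Coalgebra K C] [AddCommMonoid V] [Module K V]
    [AddCommMonoid W] [Module K W]
    (ρV : Coaction K C V) (ρW : Coaction K C W) (f : V →ₗ[K] W) : Prop :=
  ρW.ρ ∘ₗ f = LinearMap.lTensor C f ∘ₗ ρV.ρ


/-! Over a field, `C ⊗ ∏ M i` embeds into `∏ (C ⊗ M i)`. The product comodule is the subspace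
`D ⊆ ∏ M i` of those `x` whose componentwise coaction `(ρ (x i))ᵢ` comes from some
`t ∈ C ⊗ ∏ M i`. By coassociativity, slicing `t` with any functional on `C` lands in `D` again,
so `t ∈ C ⊗ D`; this defines the coaction of `D`, and the comodule axioms hold because they hold
after every projection. Any comodule mapping to all `M i` by comodule maps lands in `D`, which
gives maximality, uniqueness and the universal property. -/

open LinearMap

section Slice

variable {K : Type*} [CommRing K] {A B V W : Type*} [AddCommGroup A] [Module K A]
  [AddCommGroup B] [Module K B] [AddCommGroup V] [Module K V] [AddCommGroup W] [Module K W]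

noncomputable def slice (φ : Module.Dual K A) : A ⊗[K] V →ₗ[K] V :=
  TensorProduct.lid K V ∘ₗ rTensor V φ

@[simp]
lemma slice_tmul (φ : Module.Dual K A) (a : A) (v : V) : slice φ (a ⊗ₜ[K] v) = φ a • v := by
  simp [slice]

lemma slice_lTensor (φ : Module.Dual K A) (f : V →ₗ[K] W) (t : A ⊗[K] V) :
    slice φ (lTensor A f t) = f (slice φ t) := by
  induction t using TensorProduct.induction_on <;> simp_all

lemma slice_assoc_symm_lTensor (φ : Module.Dual K A) (g : V →ₗ[K] B ⊗[K] W) (t : A ⊗[K] V) :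
    rTensor W (slice φ) ((TensorProduct.assoc K A B W).symm (lTensor A g t)) = g (slice φ t) := by
  induction t using TensorProduct.induction_on with
  | zero => simp
  | tmul a v =>
    rw [lTensor_tmul, slice_tmul, map_smul]
    induction g v using TensorProduct.induction_on with
    | zero => simp
    | tmul b w => simp [smul_tmul']
    | add x y hx hy => simp only [tmul_add, map_add, hx, hy, smul_add]
  | add s t hs ht => simp only [map_add, hs, ht]

variable [Module.Free K A]

lemma eq_of_forall_slice_eq {s t : A ⊗[K] V} (h : ∀ φ : Module.Dual K A, slice φ s = slice φ t) :
    s = t := by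
  let b := Module.Free.chooseBasis K A
  let e := (TensorProduct.congr b.repr (LinearEquiv.refl K V)).trans
    (finsuppScalarLeft K V (Module.Free.ChooseBasisIndex K A))
  have he : ∀ t k, e t k = slice (b.coord k) t := by
    intro t k
    induction t using TensorProduct.induction_on with
    | zero => simp
    | tmul a v => simp [e, finsuppScalarLeft_apply_tmul_apply]
    | add s t hs ht => simp only [map_add, Finsupp.add_apply, hs, ht]
  exact e.injective (Finsupp.ext fun k => by rw [he, he, h])

lemma mem_range_lTensor_subtype_iff (D : Submodule K V) (t : A ⊗[K] V) :
    t ∈ range (lTensor A D.subtype) ↔ ∀ φ : Module.Dual K A, slice φ t ∈ D := by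
  constructor
  · rintro ⟨s, rfl⟩ φ
    rw [slice_lTensor]
    exact Submodule.coe_mem _
  · intro h
    refine (lTensor_exact A (exact_subtype_mkQ D) D.mkQ_surjective t).1 ?_
    refine eq_of_forall_slice_eq fun φ => ?_
    rw [slice_lTensor, map_zero, Submodule.mkQ_apply, Submodule.Quotient.mk_eq_zero]
    exact h φ

variable {I : Type*} {M : I → Type*} [∀ i, AddCommGroup (M i)] [∀ i, Module K (M i)]

lemma eq_of_forall_lTensor_proj_eq {s t : A ⊗[K] (∀ i, M i)}
    (h : ∀ i, lTensor A (proj i) s = lTensor A (proj i) t) : s = t :=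
  eq_of_forall_slice_eq fun φ => funext fun i => by
    change proj (R := K) i (slice φ s) = proj (R := K) i (slice φ t)
    rw [← slice_lTensor, ← slice_lTensor, h i]

lemma eq_of_forall_lTensor_eq {p : ∀ i, V →ₗ[K] M i} (hp : Function.Injective (pi p))
    {s t : A ⊗[K] V} (h : ∀ i, lTensor A (p i) s = lTensor A (p i) t) : s = t := by
  refine Module.Flat.lTensor_preserves_injective_linearMap _ hp
    (eq_of_forall_lTensor_proj_eq fun i => ?_)
  simpa only [← comp_apply, ← lTensor_comp, proj_pi] using h i

lemma injective_pi_proj_comp_subtype (D : Submodule K (∀ i, M i)) :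
    Function.Injective (pi fun i => proj i ∘ₗ D.subtype) :=
  fun _ _ h => Subtype.ext (funext fun i => congrFun h i)

lemma injective_lTensor_proj_comp_subtype (D : Submodule K (∀ i, M i)) :
    Function.Injective (pi fun i => lTensor A (proj i ∘ₗ D.subtype)) :=
  fun _ _ h => eq_of_forall_lTensor_eq (injective_pi_proj_comp_subtype D) (congrFun h)

end Slice

section FactorThroughInjective

variable {R M N P : Type*} [Semiring R] [AddCommMonoid M] [Module R M] [AddCommMonoid N]
  [Module R N] [AddCommMonoid P] [Module R P]

lemma comp_ofInjective_symm_comp_codRestrict {g : N →ₗ[R] P} (hg : Function.Injective g)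
    (f : M →ₗ[R] P) (h : ∀ x, f x ∈ range g) :
    g ∘ₗ (LinearEquiv.ofInjective g hg).symm.toLinearMap ∘ₗ codRestrict _ f h = f := by
  ext x
  exact congr(Subtype.val $((LinearEquiv.ofInjective g hg).apply_symm_apply (codRestrict _ f h x)))

end FactorThroughInjective

namespace Coaction

variable {K : Type*} [CommRing K] {C : Type*} [AddCommGroup C] [Module K C] [Coalgebra K C]
  {V : Type*} [AddCommGroup V] [Module K V]

lemma rTensor_slice_comp_comul (ρ : Coaction K C V) (φ : Module.Dual K C) (v : V) :
    rTensor V (slice φ ∘ₗ Coalgebra.comul) (ρ.ρ v) = ρ.ρ (slice φ (ρ.ρ v)) := by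
  have hcoassoc := congr($(ρ.coassoc) v)
  simp only [comp_apply, LinearEquiv.coe_coe] at hcoassoc
  rw [rTensor_comp, comp_apply, hcoassoc, slice_assoc_symm_lTensor]

variable [Module.Free K C] {I : Type*} {M : I → Type*} [∀ i, AddCommGroup (M i)]
  [∀ i, Module K (M i)] (σ : ∀ i, Coaction K C (M i))

def induced {p : ∀ i, V →ₗ[K] M i} (hp : Function.Injective (pi p)) (ρ : V →ₗ[K] C ⊗[K] V)
    (hρ : ∀ i, lTensor C (p i) ∘ₗ ρ = (σ i).ρ ∘ₗ p i) : Coaction K C V where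
  ρ := ρ
  coassoc := by
    ext v
    refine eq_of_forall_lTensor_eq hp fun i => ?_
    have hρv : lTensor C (p i) (ρ v) = (σ i).ρ (p i v) := congr($(hρ i) v)
    simp only [comp_apply, LinearEquiv.coe_coe]
    rw [← comp_apply (lTensor _ (p i)), lTensor_comp_rTensor, ← rTensor_comp_lTensor,
      comp_apply, hρv, ← comp_apply (rTensor _ _), (σ i).coassoc, lTensor_tensor]
    simp only [comp_apply, LinearEquiv.coe_coe, LinearEquiv.apply_symm_apply]
    rw [← comp_apply (lTensor C (lTensor C (p i))), ← lTensor_comp, hρ i, lTensor_comp,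
      comp_apply, hρv]
  counit := by
    ext v
    refine hp (funext fun i => ?_)
    change p i (slice Coalgebra.counit (ρ v)) = p i v
    rw [← slice_lTensor, ← comp_apply (lTensor C (p i)), hρ i, comp_apply]
    exact congr($((σ i).counit) (p i v))

end Coaction

section Product

variable {K : Type*} [CommRing K] {C : Type*} [AddCommGroup C] [Module K C] [Coalgebra K C]
  {I : Type*} {M : I → Type*} [∀ i, AddCommGroup (M i)] [∀ i, Module K (M i)]
  (σ : ∀ i, Coaction K C (M i))

def productSubmodule : Submodule K (∀ i, M i) :=
  (range (pi fun i => lTensor C (proj i))).comap (pi fun i => (σ i).ρ ∘ₗ proj i)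

lemma mem_productSubmodule_iff {x : ∀ i, M i} :
    x ∈ productSubmodule σ ↔
      ∃ t : C ⊗[K] (∀ i, M i), ∀ i, lTensor C (proj i) t = (σ i).ρ (x i) := by
  simp [productSubmodule, funext_iff]

lemma pi_mem_productSubmodule {U : Type*} [AddCommGroup U] [Module K U] {ρU : Coaction K C U}
    {f : ∀ i, U →ₗ[K] M i} (hf : ∀ i, IsComodHom ρU (σ i) (f i)) (u : U) :
    pi f u ∈ productSubmodule σ := by
  refine (mem_productSubmodule_iff σ).2 ⟨lTensor C (pi f) (ρU.ρ u), fun i => ?_⟩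
  rw [← comp_apply, ← lTensor_comp, proj_pi]
  exact congr($(hf i) u).symm

lemma le_productSubmodule {E : Submodule K (∀ i, M i)} {ρE : Coaction K C E}
    (hE : ∀ i, IsComodHom ρE (σ i) (proj i ∘ₗ E.subtype)) : E ≤ productSubmodule σ :=
  fun x hx => pi_mem_productSubmodule σ hE ⟨x, hx⟩

variable [Module.Free K C]

lemma exists_lTensor_eq_coaction {x : ∀ i, M i} (hx : x ∈ productSubmodule σ) :
    ∃ s : C ⊗[K] productSubmodule σ,
      ∀ i, lTensor C (proj i ∘ₗ (productSubmodule σ).subtype) s = (σ i).ρ (x i) := by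
  obtain ⟨t, ht⟩ := (mem_productSubmodule_iff σ).1 hx
  have hslice (φ : Module.Dual K C) : slice φ t ∈ productSubmodule σ := by
    refine (mem_productSubmodule_iff σ).2
      ⟨rTensor _ (slice φ ∘ₗ Coalgebra.comul) t, fun i => ?_⟩
    rw [← comp_apply, lTensor_comp_rTensor, ← rTensor_comp_lTensor, comp_apply, ht,
      Coaction.rTensor_slice_comp_comul, ← ht, slice_lTensor]
    rfl
  obtain ⟨s, rfl⟩ := (mem_range_lTensor_subtype_iff _ t).2 hslice
  exact ⟨s, fun i => by rw [lTensor_comp, comp_apply, ht]⟩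

noncomputable def productCoactionMap : productSubmodule σ →ₗ[K] C ⊗[K] productSubmodule σ :=
  (LinearEquiv.ofInjective _ (injective_lTensor_proj_comp_subtype (A := C) _)).symm.toLinearMap ∘ₗ
    codRestrict _ ((pi fun i => (σ i).ρ ∘ₗ proj i) ∘ₗ (productSubmodule σ).subtype)
      fun x => (exists_lTensor_eq_coaction σ x.2).imp fun _ hs => funext hs

lemma lTensor_comp_productCoactionMap (i : I) :
    lTensor C (proj i ∘ₗ (productSubmodule σ).subtype) ∘ₗ productCoactionMap σ =
      (σ i).ρ ∘ₗ proj i ∘ₗ (productSubmodule σ).subtype := by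
  ext x
  exact congrFun congr($(comp_ofInjective_symm_comp_codRestrict
    (injective_lTensor_proj_comp_subtype (A := C) (productSubmodule σ)) _ _) x) i

noncomputable def productCoaction : Coaction K C (productSubmodule σ) :=
  Coaction.induced σ (injective_pi_proj_comp_subtype _) (productCoactionMap σ)
    (lTensor_comp_productCoactionMap σ)

lemma isComodHom_productCoaction (i : I) :
    IsComodHom (productCoaction σ) (σ i) (proj i ∘ₗ (productSubmodule σ).subtype) :=
  (lTensor_comp_productCoactionMap σ i).symm

lemma existsUnique_isComodHom_comp_eq {ρD : Coaction K C (productSubmodule σ)}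
    (hD : ∀ i, IsComodHom ρD (σ i) (proj i ∘ₗ (productSubmodule σ).subtype))
    {U : Type*} [AddCommGroup U] [Module K U] {ρU : Coaction K C U} {f : ∀ i, U →ₗ[K] M i}
    (hf : ∀ i, IsComodHom ρU (σ i) (f i)) :
    ∃! g : U →ₗ[K] productSubmodule σ, IsComodHom ρU ρD g ∧
      ∀ i, (proj i ∘ₗ (productSubmodule σ).subtype) ∘ₗ g = f i := by
  let g := codRestrict _ (pi f) (pi_mem_productSubmodule σ hf)
  have hg (i : I) : (proj i ∘ₗ (productSubmodule σ).subtype) ∘ₗ g = f i := rfl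
  refine ⟨g, ⟨?_, hg⟩, fun g' hg' => ?_⟩
  · ext u
    refine eq_of_forall_lTensor_eq (injective_pi_proj_comp_subtype _) fun i => ?_
    calc lTensor C (proj i ∘ₗ (productSubmodule σ).subtype) (ρD.ρ (g u))
        = (σ i).ρ (f i u) := congr($(hD i) (g u)).symm
      _ = lTensor C (f i) (ρU.ρ u) := congr($(hf i) u)
      _ = lTensor C (proj i ∘ₗ (productSubmodule σ).subtype) (lTensor C g (ρU.ρ u)) := by
        rw [← hg i, lTensor_comp, comp_apply]
  · ext u i
    exact congr($(hg'.2 i) u)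

end Product

/-- Let `K` be a field, `C` a coassociative counital `K`-coalgebra and
`(M i)` a family of left `C`-comodules, with `P = ∀ i, M i` the product of the underlying
vector spaces and projections `π i`. Then there is a unique maximal subspace `D ⊆ P`
carrying a left `C`-comodule structure such that all restrictions `π i |_D` are comodule
morphisms, and `D` with these restrictions is the product of the family in the category
of left `C`-comodules. -/
theorem comodule_product (K : Type u) [Field K] (C : Type v) [AddCommGroup C] [Module K C]
    [Coalgebra K C] {I : Type w} (M : I → Type w')
    [∀ i, AddCommGroup (M i)] [∀ i, Module K (M i)] (σ : ∀ i, Coaction K C (M i)) :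
    ∃! D : Submodule K (∀ i, M i),
      (∃ ρD : Coaction K C D,
        ∀ i, IsComodHom ρD (σ i) (LinearMap.proj i ∘ₗ D.subtype)) ∧
      (∀ E : Submodule K (∀ i, M i),
        (∃ ρE : Coaction K C E,
          ∀ i, IsComodHom ρE (σ i) (LinearMap.proj i ∘ₗ E.subtype)) → E ≤ D) ∧
      (∀ ρD : Coaction K C D,
        (∀ i, IsComodHom ρD (σ i) (LinearMap.proj i ∘ₗ D.subtype)) →
        ∀ (U : Type (max u v w w')) [AddCommGroup U] [Module K U] (ρU : Coaction K C U)
          (f : ∀ i, U →ₗ[K] M i), (∀ i, IsComodHom ρU (σ i) (f i)) →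
          ∃! g : U →ₗ[K] D, IsComodHom ρU ρD g ∧
            ∀ i, (LinearMap.proj i ∘ₗ D.subtype) ∘ₗ g = f i) := by
  refine ⟨productSubmodule σ, ⟨⟨productCoaction σ, isComodHom_productCoaction σ⟩,
    fun E ⟨_, hE⟩ => le_productSubmodule σ hE,
    fun _ hD _ _ _ _ _ hf => existsUnique_isComodHom_comp_eq σ hD hf⟩, ?_⟩
  rintro D ⟨⟨_, hD⟩, hmax, -⟩
  exact le_antisymm (le_productSubmodule σ hD)
    (hmax _ ⟨productCoaction σ, isComodHom_productCoaction σ⟩)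
end

section
/- Let K be a field, C a coassociative counital K-coalgebra, and {M_i}_{i∈I} a family of left C-comodules with vector-space product P = ∏_{i∈I} M_i and projections π_i : P → M_i. If E ⊆ P is a K-subspace, then E admits at most one left C-comodule structure ρ_E : E → C⊗_K E such that every composite π_i|_E : E → M_i is a comodule morphism. Consequently, the collection of subspaces of P admitting such a comodule structure is directed under inclusion of vector subspaces. -/
/-!
Over a field, `C ⊗ -` preserves joint injectivity of a family of linear maps (expand in a basis
of `C`). Since the projections `π i` are jointly injective on `E`, the coaction of `E` is
determined by the coactions of the `M i`, and any linear map `E → C ⊗ E` along which all `π i`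
are colinear inherits coassociativity and counitality from the `M i`. Such a map on `E₁ + E₂` is
`ρ₁ ⊕ ρ₂` precomposed with a linear section of the addition map `E₁ × E₂ → E₁ + E₂`.
-/

open TensorProduct

universe u v w w'

open LinearMap Coalgebra

theorem TensorProduct.equivFinsuppOfBasisLeft_lTensor_apply {R Q V W κ : Type*} [CommSemiring R]
    [AddCommMonoid Q] [Module R Q] [AddCommMonoid V] [Module R V] [AddCommMonoid W] [Module R W]
    [DecidableEq κ] (b : Module.Basis κ R Q) (f : V →ₗ[R] W) (x : Q ⊗[R] V) (k : κ) :
    equivFinsuppOfBasisLeft b (f.lTensor Q x) k = f (equivFinsuppOfBasisLeft b x k) := by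
  induction x with
  | zero => simp
  | tmul q v => simp
  | add x y hx hy => simp_all

section

variable {R V X : Type*} {ι : Type*} {N : ι → Type*} [CommSemiring R]
  [AddCommMonoid V] [Module R V] [AddCommMonoid X] [Module R X]
  [∀ i, AddCommMonoid (N i)] [∀ i, Module R (N i)] {f : ∀ i, V →ₗ[R] N i}

theorem LinearMap.ext_of_injective_pi (hf : Function.Injective (pi f)) {A B : X →ₗ[R] V}
    (h : ∀ i, f i ∘ₗ A = f i ∘ₗ B) : A = B :=
  LinearMap.ext fun x => hf <| funext fun i => LinearMap.congr_fun (h i) x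

/-- For infinite families this does not follow from flatness of `Q`. -/
theorem LinearMap.injective_pi_lTensor (Q : Type*) [AddCommMonoid Q] [Module R Q]
    [Module.Free R Q] (hf : Function.Injective (pi f)) :
    Function.Injective (pi fun i => (f i).lTensor Q) := by
  classical
  let b := Module.Free.chooseBasis R Q
  intro x y hxy
  refine (equivFinsuppOfBasisLeft b).injective (Finsupp.ext fun k => hf (funext fun i => ?_))
  simpa [← equivFinsuppOfBasisLeft_lTensor_apply] using
    congr(equivFinsuppOfBasisLeft b ($hxy i) k)

end

theorem Submodule.injective_pi_proj_comp_subtype {R ι : Type*} {M : ι → Type*} [Semiring R]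
    [∀ i, AddCommMonoid (M i)] [∀ i, Module R (M i)] (E : Submodule R (∀ i, M i)) :
    Function.Injective (LinearMap.pi fun i => proj i ∘ₗ E.subtype) :=
  Subtype.val_injective

namespace Coaction

variable {K C V : Type*} {ι : Type*} {W : ι → Type*} [CommSemiring K] [AddCommMonoid C]
  [Module K C] [Coalgebra K C] [AddCommMonoid V] [Module K V] [∀ i, AddCommMonoid (W i)]
  [∀ i, Module K (W i)]

@[ext]
theorem ext {ρ₁ ρ₂ : Coaction K C V} (h : ρ₁.ρ = ρ₂.ρ) : ρ₁ = ρ₂ := by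
  cases ρ₁; cases ρ₂; congr

variable {σ : ∀ i, Coaction K C (W i)} {f : ∀ i, V →ₗ[K] W i}

theorem counit_of_injective_pi (hf : Function.Injective (LinearMap.pi f))
    {ρ : V →ₗ[K] C ⊗[K] V} (hρ : ∀ i, (σ i).ρ ∘ₗ f i = (f i).lTensor C ∘ₗ ρ) :
    (TensorProduct.lid K V).toLinearMap ∘ₗ Coalgebra.counit.rTensor V ∘ₗ ρ = LinearMap.id := by
  refine ext_of_injective_pi hf fun i => ?_
  let εW := (TensorProduct.lid K (W i)).toLinearMap ∘ₗ
    (Coalgebra.counit (R := K) (A := C)).rTensor (W i)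
  have hcounit : f i ∘ₗ (TensorProduct.lid K V).toLinearMap ∘ₗ Coalgebra.counit.rTensor V =
      εW ∘ₗ (f i).lTensor C := by
    ext c v; simp [εW]
  calc f i ∘ₗ (TensorProduct.lid K V).toLinearMap ∘ₗ Coalgebra.counit.rTensor V ∘ₗ ρ
      = εW ∘ₗ (f i).lTensor C ∘ₗ ρ := congr($hcounit ∘ₗ ρ)
    _ = (εW ∘ₗ (σ i).ρ) ∘ₗ f i := congr(εW ∘ₗ $((hρ i).symm))
    _ = f i ∘ₗ LinearMap.id := congr($((σ i).counit) ∘ₗ f i)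

variable [Module.Free K C]

theorem eq_of_isComodHom (hf : Function.Injective (LinearMap.pi f)) {ρ₁ ρ₂ : Coaction K C V}
    (h₁ : ∀ i, IsComodHom ρ₁ (σ i) (f i)) (h₂ : ∀ i, IsComodHom ρ₂ (σ i) (f i)) : ρ₁ = ρ₂ :=
  ext <| ext_of_injective_pi (injective_pi_lTensor C hf) fun i => (h₁ i).symm.trans (h₂ i)

theorem coassoc_of_injective_pi (hf : Function.Injective (LinearMap.pi f))
    {ρ : V →ₗ[K] C ⊗[K] V} (hρ : ∀ i, (σ i).ρ ∘ₗ f i = (f i).lTensor C ∘ₗ ρ) :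
    comul.rTensor V ∘ₗ ρ = (TensorProduct.assoc K C C V).symm.toLinearMap ∘ₗ ρ.lTensor C ∘ₗ ρ := by
  refine ext_of_injective_pi (injective_pi_lTensor (C ⊗[K] C) hf) fun i => ?_
  let α := (TensorProduct.assoc K C C (W i)).symm.toLinearMap
  have hcomul : (f i).lTensor (C ⊗[K] C) ∘ₗ comul.rTensor V =
      comul.rTensor (W i) ∘ₗ (f i).lTensor C := by
    ext c v; simp
  have hassoc : (f i).lTensor (C ⊗[K] C) ∘ₗ (TensorProduct.assoc K C C V).symm.toLinearMap =
      α ∘ₗ ((f i).lTensor C).lTensor C := by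
    ext c d v; simp [α]
  have hρρ : (σ i).ρ.lTensor C ∘ₗ (f i).lTensor C =
      ((f i).lTensor C).lTensor C ∘ₗ ρ.lTensor C := by
    rw [← lTensor_comp, hρ, lTensor_comp]
  calc (f i).lTensor (C ⊗[K] C) ∘ₗ comul.rTensor V ∘ₗ ρ
      = comul.rTensor (W i) ∘ₗ (f i).lTensor C ∘ₗ ρ := congr($hcomul ∘ₗ ρ)
    _ = (comul.rTensor (W i) ∘ₗ (σ i).ρ) ∘ₗ f i := congr(comul.rTensor (W i) ∘ₗ $((hρ i).symm))
    _ = (α ∘ₗ (σ i).ρ.lTensor C ∘ₗ (σ i).ρ) ∘ₗ f i := congr($((σ i).coassoc) ∘ₗ f i)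
    _ = α ∘ₗ (σ i).ρ.lTensor C ∘ₗ (f i).lTensor C ∘ₗ ρ := congr(α ∘ₗ _ ∘ₗ $(hρ i))
    _ = α ∘ₗ ((f i).lTensor C).lTensor C ∘ₗ ρ.lTensor C ∘ₗ ρ := congr(α ∘ₗ $hρρ ∘ₗ ρ)
    _ = (f i).lTensor (C ⊗[K] C) ∘ₗ (TensorProduct.assoc K C C V).symm.toLinearMap ∘ₗ
          ρ.lTensor C ∘ₗ ρ := congr($hassoc.symm ∘ₗ ρ.lTensor C ∘ₗ ρ)

variable (σ f) in
def ofInjectivePi (hf : Function.Injective (LinearMap.pi f)) (ρ : V →ₗ[K] C ⊗[K] V)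
    (hρ : ∀ i, (σ i).ρ ∘ₗ f i = (f i).lTensor C ∘ₗ ρ) : Coaction K C V :=
  ⟨ρ, coassoc_of_injective_pi hf hρ, counit_of_injective_pi hf hρ⟩

end Coaction

theorem Submodule.exists_lTensor_comp_sup {K C P : Type*} {ι : Type*} {W : ι → Type*} [Field K]
    [AddCommGroup C] [Module K C] [AddCommGroup P] [Module K P] [∀ i, AddCommGroup (W i)]
    [∀ i, Module K (W i)] (τ : ∀ i, W i →ₗ[K] C ⊗[K] W i) (f : ∀ i, P →ₗ[K] W i)
    {E₁ E₂ : Submodule K P} {ρ₁ : E₁ →ₗ[K] C ⊗[K] E₁} {ρ₂ : E₂ →ₗ[K] C ⊗[K] E₂}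
    (h₁ : ∀ i, τ i ∘ₗ (f i ∘ₗ E₁.subtype) = (f i ∘ₗ E₁.subtype).lTensor C ∘ₗ ρ₁)
    (h₂ : ∀ i, τ i ∘ₗ (f i ∘ₗ E₂.subtype) = (f i ∘ₗ E₂.subtype).lTensor C ∘ₗ ρ₂) :
    ∃ ρ : ↥(E₁ ⊔ E₂) →ₗ[K] C ⊗[K] ↥(E₁ ⊔ E₂), ∀ i,
      τ i ∘ₗ (f i ∘ₗ (E₁ ⊔ E₂).subtype) = (f i ∘ₗ (E₁ ⊔ E₂).subtype).lTensor C ∘ₗ ρ := by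
  let ι₁ := Submodule.inclusion (le_sup_left : E₁ ≤ E₁ ⊔ E₂)
  let ι₂ := Submodule.inclusion (le_sup_right : E₂ ≤ E₁ ⊔ E₂)
  let s := ι₁.coprod ι₂
  have hs : range s = ⊤ := by
    refine range_eq_top.2 fun ⟨x, hx⟩ => ?_
    obtain ⟨a, ha, b, hb, rfl⟩ := Submodule.mem_sup.1 hx
    exact ⟨(⟨a, ha⟩, ⟨b, hb⟩), rfl⟩
  obtain ⟨g, hg⟩ := s.exists_rightInverse_of_surjective hs
  refine ⟨((ι₁.lTensor C ∘ₗ ρ₁).coprod (ι₂.lTensor C ∘ₗ ρ₂)) ∘ₗ g, fun i => ?_⟩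
  have hlift : (f i ∘ₗ (E₁ ⊔ E₂).subtype).lTensor C ∘ₗ
      (ι₁.lTensor C ∘ₗ ρ₁).coprod (ι₂.lTensor C ∘ₗ ρ₂) =
        τ i ∘ₗ (f i ∘ₗ (E₁ ⊔ E₂).subtype) ∘ₗ s := by
    refine prod_ext ?_ ?_ <;> simp only [s, comp_assoc, coprod_inl, coprod_inr] <;>
      rw [← comp_assoc, ← lTensor_comp, comp_assoc, Submodule.subtype_comp_inclusion]
    exacts [(h₁ i).symm, (h₂ i).symm]
  calc τ i ∘ₗ (f i ∘ₗ (E₁ ⊔ E₂).subtype)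
      = (τ i ∘ₗ (f i ∘ₗ (E₁ ⊔ E₂).subtype) ∘ₗ s) ∘ₗ g := by simp only [comp_assoc, hg, comp_id]
    _ = _ := congr($hlift.symm ∘ₗ g)

/-- Let `K` be a field, `C` a coassociative counital `K`-coalgebra and
`(M i)` a family of left `C`-comodules with vector-space product `P = ∀ i, M i` and
projections `π i`. Then any subspace `E ⊆ P` admits at most one coaction `ρE` making all
composites `π i |_E` comodule morphisms; consequently, the collection of subspaces of `P`
admitting such a comodule structure is directed under inclusion. -/
theorem comodule_subspace_coaction_unique_and_directed (K : Type u) [Field K] (C : Type v)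
    [AddCommGroup C] [Module K C] [Coalgebra K C] {I : Type w} (M : I → Type w')
    [∀ i, AddCommGroup (M i)] [∀ i, Module K (M i)] (σ : ∀ i, Coaction K C (M i)) :
    (∀ (E : Submodule K (∀ i, M i)) (ρ₁ ρ₂ : Coaction K C E),
      (∀ i, IsComodHom ρ₁ (σ i) (LinearMap.proj i ∘ₗ E.subtype)) →
      (∀ i, IsComodHom ρ₂ (σ i) (LinearMap.proj i ∘ₗ E.subtype)) → ρ₁ = ρ₂) ∧
    DirectedOn (· ≤ ·)
      {E : Submodule K (∀ i, M i) |
        ∃ ρE : Coaction K C E,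
          ∀ i, IsComodHom ρE (σ i) (LinearMap.proj i ∘ₗ E.subtype)} := by
  refine ⟨fun E _ _ => Coaction.eq_of_isComodHom E.injective_pi_proj_comp_subtype, ?_⟩
  rintro E₁ ⟨ρ₁, h₁⟩ E₂ ⟨ρ₂, h₂⟩
  obtain ⟨ρ, hρ⟩ := Submodule.exists_lTensor_comp_sup (fun i => (σ i).ρ) LinearMap.proj h₁ h₂
  exact ⟨E₁ ⊔ E₂,
    ⟨Coaction.ofInjectivePi σ _ (E₁ ⊔ E₂).injective_pi_proj_comp_subtype ρ hρ, hρ⟩,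
    le_sup_left, le_sup_right⟩
end

section
/- Let K be a field, C a coassociative counital K-coalgebra, and {M_i}_{i∈I} a family of left C-comodules with vector-space product P = ∏_{i∈I} M_i and projections π_i. Consider the cofree comodule C⊗_K P with covering map p = ε_C⊗id_P : C⊗_K P → P, and let D' be the sum of all subcomodules E ⊆ C⊗_K P such that each composite π_i ∘ p|_E : E → M_i is a comodule morphism. Then D' is a subcomodule of C⊗_K P and (D', {π_i ∘ p|_{D'}}_{i∈I}) is the product of the family {M_i}_{i∈I} in the category of left C-comodules. -/
/-!
The cofree comodule `C ⊗ P` with covering map `p = ε ⊗ id` is cofree in the expected sense: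
`g ↦ p ∘ g` is a bijection from comodule maps `U → C ⊗ P` onto linear maps `U → P`, with inverse
`F ↦ (id ⊗ F) ∘ ρ_U`. A submodule `E` is a subcomodule on which every `π i ∘ p` is a comodule map
iff it is stable under the coaction and lies in the equalizer of `ρ_{M i} ∘ π i ∘ p` and
`(id ⊗ π i ∘ p) ∘ ρ` for each `i`; both conditions survive arbitrary sums, so `D'` is the largest
such subcomodule. For comodule maps `f i : U → M i`, the image of the lift of `(f i)_i` is such a
subcomodule, hence lies in `D'`, which gives the factorization; uniqueness follows from
cofreeness because `D' → C ⊗ P` is injective. Restricting a coaction to a stable submodule needs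
`C ⊗ -` to preserve injections, i.e. flatness of `C`, which is automatic over a field.
-/

open TensorProduct

universe u v w w'

open LinearMap Coalgebra

theorem TensorProduct.assoc_tmul_eq_lTensor {R M N P : Type*} [CommSemiring R]
    [AddCommMonoid M] [Module R M] [AddCommMonoid N] [Module R N] [AddCommMonoid P] [Module R P]
    (t : M ⊗[R] N) (x : P) :
    TensorProduct.assoc R M N P (t ⊗ₜ x) = lTensor M ((TensorProduct.mk R N P).flip x) t := by
  induction t with
  | zero => simp
  | tmul a b => simp
  | add y z hy hz => simp only [add_tmul, map_add, hy, hz]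

theorem LinearMap.range_lTensor_subtype_mono {R M N : Type*} [CommSemiring R]
    [AddCommMonoid M] [Module R M] [AddCommMonoid N] [Module R N] {E F : Submodule R N}
    (h : E ≤ F) : range (lTensor M E.subtype) ≤ range (lTensor M F.subtype) := by
  rw [← Submodule.subtype_comp_inclusion E F h, lTensor_comp]
  exact range_comp_le_range _ _

section Semiring

variable {K : Type*} [CommSemiring K] {C : Type*} [AddCommMonoid C] [Module K C] [Coalgebra K C]
  {U V W : Type*} [AddCommMonoid U] [Module K U] [AddCommMonoid V] [Module K V]
  [AddCommMonoid W] [Module K W] {ρU : Coaction K C U} {ρV : Coaction K C V} {ρW : Coaction K C W}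

theorem IsComodHom.comp {g : V →ₗ[K] W} {f : U →ₗ[K] V} (hg : IsComodHom ρV ρW g)
    (hf : IsComodHom ρU ρV f) : IsComodHom ρU ρW (g ∘ₗ f) := by
  unfold IsComodHom at *
  rw [lTensor_comp, comp_assoc, ← hf, ← comp_assoc, hg, comp_assoc]

theorem IsComodHom.comp_iff_range_le_eqLocus {g : U →ₗ[K] W} (hg : IsComodHom ρU ρW g)
    (f : W →ₗ[K] V) :
    IsComodHom ρU ρV (f ∘ₗ g) ↔ range g ≤ eqLocus (ρV.ρ ∘ₗ f) (lTensor C f ∘ₗ ρW.ρ) := by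
  have hfg : lTensor C (f ∘ₗ g) ∘ₗ ρU.ρ = (lTensor C f ∘ₗ ρW.ρ) ∘ₗ g := by
    rw [lTensor_comp, comp_assoc, ← hg, comp_assoc]
  rw [IsComodHom, hfg, le_eqLocus, coe_range, Set.eqOn_range, ← coe_comp, ← coe_comp,
    DFunLike.coe_fn_eq]
  rfl

namespace Coaction

variable (C) in
def cofreeCounit (P : Type*) [AddCommMonoid P] [Module K P] : C ⊗[K] P →ₗ[K] P :=
  (TensorProduct.lid K P).toLinearMap ∘ₗ rTensor P Coalgebra.counit

theorem cofreeCounit_comp_lTensor (f : V →ₗ[K] W) :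
    cofreeCounit C W ∘ₗ lTensor C f = f ∘ₗ cofreeCounit C V :=
  TensorProduct.ext' fun c v => by simp [cofreeCounit]

theorem cofreeCounit_comp_ρ (ρV : Coaction K C V) : cofreeCounit C V ∘ₗ ρV.ρ = LinearMap.id :=
  ρV.counit

variable (ρW) in
def IsSubcomodule (E : Submodule K W) : Prop :=
  ∀ x ∈ E, ρW.ρ x ∈ range (lTensor C E.subtype)

theorem isSubcomodule_of_isComodHom_subtype {E : Submodule K W} {ρE : Coaction K C E}
    (h : IsComodHom ρE ρW E.subtype) : ρW.IsSubcomodule E :=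
  fun x hx => ⟨ρE.ρ ⟨x, hx⟩, congr($h ⟨x, hx⟩).symm⟩

theorem isSubcomodule_range {g : U →ₗ[K] W} (hg : IsComodHom ρU ρW g) :
    ρW.IsSubcomodule (range g) := by
  rintro _ ⟨u, rfl⟩
  refine ⟨lTensor C g.rangeRestrict (ρU.ρ u), ?_⟩
  rw [← comp_apply, ← lTensor_comp, subtype_comp_codRestrict]
  exact congr($hg u).symm

theorem isSubcomodule_sSup {S : Set (Submodule K W)} (hS : ∀ E ∈ S, ρW.IsSubcomodule E) :
    ρW.IsSubcomodule (sSup S) := by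
  suffices sSup S ≤ (range (lTensor C (sSup S).subtype)).comap ρW.ρ from fun x hx => this hx
  exact sSup_le fun E hE x hx => range_lTensor_subtype_mono (le_sSup hE) (hS E hE x hx)

end Coaction

end Semiring

section Flat

variable {K : Type*} [CommSemiring K] {C : Type*} [AddCommMonoid C] [Module K C] [Coalgebra K C]
  [Module.Flat K C]
  {U W E : Type*} [AddCommMonoid U] [Module K U] [AddCommMonoid W] [Module K W]
  [AddCommMonoid E] [Module K E] {ρU : Coaction K C U} {ρW : Coaction K C W}

namespace Coaction

variable (ρW) in
def ofInjective (ι : E →ₗ[K] W) (hι : Function.Injective ι) (ρ : E →ₗ[K] C ⊗[K] E)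
    (hρ : lTensor C ι ∘ₗ ρ = ρW.ρ ∘ₗ ι) : Coaction K C E where
  ρ := ρ
  coassoc := by
    have hι₂ := Module.Flat.lTensor_preserves_injective_linearMap (M := C ⊗[K] C) ι hι
    refine (cancel_left hι₂).1 ?_
    let α := (TensorProduct.assoc K C C W).symm.toLinearMap
    calc lTensor (C ⊗[K] C) ι ∘ₗ rTensor E comul ∘ₗ ρ
        = rTensor W comul ∘ₗ lTensor C ι ∘ₗ ρ := by
          rw [← comp_assoc, lTensor_comp_rTensor, ← rTensor_comp_lTensor, comp_assoc]
      _ = α ∘ₗ lTensor C ρW.ρ ∘ₗ ρW.ρ ∘ₗ ι := by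
          rw [hρ, ← comp_assoc, ρW.coassoc]; simp only [α, comp_assoc]
      _ = α ∘ₗ lTensor C (lTensor C ι) ∘ₗ lTensor C ρ ∘ₗ ρ := by
          rw [← hρ]
          congr 1
          rw [← comp_assoc, ← lTensor_comp, ← hρ, lTensor_comp, comp_assoc]
      _ = _ := by simp [α, lTensor_tensor, comp_assoc]
  counit := by
    refine (cancel_left hι).1 ?_
    change ι ∘ₗ cofreeCounit C E ∘ₗ ρ = ι ∘ₗ LinearMap.id
    rw [← comp_assoc, ← cofreeCounit_comp_lTensor, comp_assoc, hρ, ← comp_assoc,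
      cofreeCounit_comp_ρ, id_comp, comp_id]

theorem isComodHom_ofInjective (ι : E →ₗ[K] W) (hι : Function.Injective ι)
    (ρ : E →ₗ[K] C ⊗[K] E) (hρ : lTensor C ι ∘ₗ ρ = ρW.ρ ∘ₗ ι) :
    IsComodHom (ofInjective ρW ι hι ρ hρ) ρW ι :=
  hρ.symm

variable {M : Submodule K W}

variable (ρW) in
noncomputable def restrict (hM : ρW.IsSubcomodule M) : Coaction K C M :=
  ofInjective ρW M.subtype M.injective_subtype
    (codRestrictOfInjective (ρW.ρ ∘ₗ M.subtype) (lTensor C M.subtype)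
      (Module.Flat.lTensor_preserves_injective_linearMap _ M.injective_subtype)
      fun x => hM x x.2)
    (codRestrictOfInjective_comp _ _ _ _)

theorem isComodHom_restrict_subtype (hM : ρW.IsSubcomodule M) :
    IsComodHom (ρW.restrict hM) ρW M.subtype :=
  isComodHom_ofInjective ..

variable {I : Type*} {V : I → Type*} [∀ i, AddCommMonoid (V i)] [∀ i, Module K (V i)]
  {σ : ∀ i, Coaction K C (V i)} {f : ∀ i, W →ₗ[K] V i}

variable (ρW σ f) in
def IsCompatibleSubcomodule (M : Submodule K W) : Prop :=
  ∃ ρM : Coaction K C M, IsComodHom ρM ρW M.subtype ∧ ∀ i, IsComodHom ρM (σ i) (f i ∘ₗ M.subtype)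

theorem isCompatibleSubcomodule_iff :
    ρW.IsCompatibleSubcomodule σ f M ↔
      ρW.IsSubcomodule M ∧ ∀ i, M ≤ eqLocus ((σ i).ρ ∘ₗ f i) (lTensor C (f i) ∘ₗ ρW.ρ) := by
  constructor
  · rintro ⟨ρM, hM, hf⟩
    exact ⟨isSubcomodule_of_isComodHom_subtype hM,
      fun i => M.range_subtype ▸ (hM.comp_iff_range_le_eqLocus (f i)).1 (hf i)⟩
  · rintro ⟨hM, hf⟩
    have hsub := isComodHom_restrict_subtype hM
    exact ⟨ρW.restrict hM, hsub,
      fun i => (hsub.comp_iff_range_le_eqLocus (f i)).2 (M.range_subtype.symm ▸ hf i)⟩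

theorem isCompatibleSubcomodule_sSup :
    ρW.IsCompatibleSubcomodule σ f (sSup {M | ρW.IsCompatibleSubcomodule σ f M}) :=
  isCompatibleSubcomodule_iff.2
    ⟨isSubcomodule_sSup fun _ hM => (isCompatibleSubcomodule_iff.1 hM).1,
      fun i => sSup_le fun _ hM => (isCompatibleSubcomodule_iff.1 hM).2 i⟩

end Coaction

theorem IsComodHom.of_comp_injective {ρE : Coaction K C E} {ι : E →ₗ[K] W} {g : U →ₗ[K] E}
    (hι : IsComodHom ρE ρW ι) (hinj : Function.Injective ι) (hιg : IsComodHom ρU ρW (ι ∘ₗ g)) :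
    IsComodHom ρU ρE g := by
  refine (cancel_left (Module.Flat.lTensor_preserves_injective_linearMap (M := C) ι hinj)).1 ?_
  unfold IsComodHom at hι hιg
  rw [← comp_assoc, ← hι, comp_assoc, hιg, lTensor_comp, comp_assoc]

end Flat

namespace Coaction

variable {K : Type*} [CommSemiring K] {C : Type*} [AddCommMonoid C] [Module K C] [Coalgebra K C]
  {P U : Type*} [AddCommMonoid P] [Module K P] [AddCommMonoid U] [Module K U]

variable (P) in
noncomputable def cofree : Coaction K C (C ⊗[K] P) where
  ρ := (TensorProduct.assoc K C C P).toLinearMap ∘ₗ rTensor P comul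
  coassoc := by
    refine TensorProduct.ext' fun c x => ?_
    set ρ := (TensorProduct.assoc K C C P).toLinearMap ∘ₗ rTensor P (comul (R := K) (A := C))
    -- `t = (· ⊗ x)` intertwines `Δ` with `ρ`, so coassociativity of `ρ` reduces to that of `Δ`.
    set t := (TensorProduct.mk K C P).flip x
    have ht : ρ ∘ₗ t = lTensor C t ∘ₗ comul := by
      ext c; exact TensorProduct.assoc_tmul_eq_lTensor _ _
    change rTensor _ comul (ρ (t c)) = (TensorProduct.assoc K C C _).symm (lTensor C ρ (ρ (t c)))
    rw [← comp_apply ρ t, ht]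
    calc rTensor _ comul (lTensor C t (comul c))
        = lTensor (C ⊗[K] C) t (rTensor C comul (comul c)) := by
          rw [← comp_apply, rTensor_comp_lTensor, ← lTensor_comp_rTensor, comp_apply]
      _ = lTensor (C ⊗[K] C) t
            ((TensorProduct.assoc K C C C).symm (lTensor C comul (comul c))) := by
          rw [coassoc_symm_apply]
      _ = _ := by
          rw [lTensor_tensor]
          simp only [comp_apply, LinearEquiv.coe_coe, LinearEquiv.apply_symm_apply]
          rw [← comp_apply (lTensor C ρ), ← lTensor_comp, ht, lTensor_comp, comp_apply]
  counit := by
    refine TensorProduct.ext' fun c x => ?_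
    simp only [comp_apply, LinearEquiv.coe_coe, rTensor_tmul, TensorProduct.assoc_tmul_eq_lTensor]
    rw [← comp_apply (rTensor _ _), rTensor_comp_lTensor, ← lTensor_comp_rTensor, comp_apply,
      rTensor_counit_comul]
    simp

variable (P) in
theorem lTensor_cofreeCounit_comp_cofree_ρ :
    lTensor C (cofreeCounit C P) ∘ₗ (cofree (K := K) (C := C) P).ρ = LinearMap.id := by
  refine TensorProduct.ext' fun c x => ?_
  have hε : cofreeCounit C P ∘ₗ (TensorProduct.mk K C P).flip x =
      toSpanSingleton K P x ∘ₗ Coalgebra.counit := by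
    ext c; simp [cofreeCounit]
  simp only [cofree, comp_apply, LinearEquiv.coe_coe, rTensor_tmul,
    TensorProduct.assoc_tmul_eq_lTensor]
  rw [← comp_apply, ← lTensor_comp, hε, lTensor_comp, comp_apply, lTensor_counit_comul]
  simp

def cofreeLift (ρU : Coaction K C U) (F : U →ₗ[K] P) : U →ₗ[K] C ⊗[K] P :=
  lTensor C F ∘ₗ ρU.ρ

theorem isComodHom_cofreeLift (ρU : Coaction K C U) (F : U →ₗ[K] P) :
    IsComodHom ρU (cofree P) (cofreeLift ρU F) := by
  unfold IsComodHom cofreeLift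
  calc (cofree P).ρ ∘ₗ lTensor C F ∘ₗ ρU.ρ
      = (TensorProduct.assoc K C C P).toLinearMap ∘ₗ lTensor (C ⊗[K] C) F ∘ₗ
          rTensor U comul ∘ₗ ρU.ρ := by
        simp only [cofree, comp_assoc]
        congr 1
        rw [← comp_assoc, rTensor_comp_lTensor, ← lTensor_comp_rTensor, comp_assoc]
    _ = lTensor C (lTensor C F) ∘ₗ (TensorProduct.assoc K C C U).toLinearMap ∘ₗ
          rTensor U comul ∘ₗ ρU.ρ := by
        simp [lTensor_tensor, comp_assoc]
    _ = lTensor C (lTensor C F) ∘ₗ lTensor C ρU.ρ ∘ₗ ρU.ρ := by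
        rw [ρU.coassoc]; simp [← comp_assoc]
    _ = lTensor C (lTensor C F ∘ₗ ρU.ρ) ∘ₗ ρU.ρ := by rw [lTensor_comp, comp_assoc]

theorem cofreeCounit_comp_cofreeLift (ρU : Coaction K C U) (F : U →ₗ[K] P) :
    cofreeCounit C P ∘ₗ cofreeLift ρU F = F := by
  rw [cofreeLift, ← comp_assoc, cofreeCounit_comp_lTensor, comp_assoc, cofreeCounit_comp_ρ,
    comp_id]

theorem eq_cofreeLift_of_isComodHom {ρU : Coaction K C U} {g : U →ₗ[K] C ⊗[K] P}
    (hg : IsComodHom ρU (cofree P) g) : g = cofreeLift ρU (cofreeCounit C P ∘ₗ g) :=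
  calc g = (lTensor C (cofreeCounit C P) ∘ₗ (cofree P).ρ) ∘ₗ g := by
          rw [lTensor_cofreeCounit_comp_cofree_ρ, id_comp]
    _ = _ := by rw [comp_assoc, hg, cofreeLift, lTensor_comp, comp_assoc]

end Coaction

section Product

variable {K : Type*} [CommSemiring K] {C : Type*} [AddCommMonoid C] [Module K C] [Coalgebra K C]
  [Module.Flat K C] {I : Type*} {M : I → Type*} [∀ i, AddCommMonoid (M i)] [∀ i, Module K (M i)]
  {U : Type*} [AddCommMonoid U] [Module K U] {ρU : Coaction K C U}

namespace Coaction

theorem isCompatibleSubcomodule_range_cofreeLift {σ : ∀ i, Coaction K C (M i)}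
    {f : ∀ i, U →ₗ[K] M i} (hf : ∀ i, IsComodHom ρU (σ i) (f i)) :
    (cofree (∀ i, M i)).IsCompatibleSubcomodule σ (fun i => proj i ∘ₗ cofreeCounit C _)
      (range (cofreeLift ρU (pi f))) := by
  have hF := isComodHom_cofreeLift ρU (pi f)
  refine isCompatibleSubcomodule_iff.2
    ⟨isSubcomodule_range hF, fun i => (hF.comp_iff_range_le_eqLocus _).1 ?_⟩
  rw [comp_assoc, cofreeCounit_comp_cofreeLift, proj_pi]
  exact hf i

theorem existsUnique_isComodHom_of_range_cofreeLift_le {D : Submodule K (C ⊗[K] ∀ i, M i)}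
    {ρD : Coaction K C D} (hD : IsComodHom ρD (cofree _) D.subtype) {f : ∀ i, U →ₗ[K] M i}
    (hfD : range (cofreeLift ρU (pi f)) ≤ D) :
    ∃! g : U →ₗ[K] D, IsComodHom ρU ρD g ∧
      ∀ i, ((proj i ∘ₗ cofreeCounit C _) ∘ₗ D.subtype) ∘ₗ g = f i := by
  set F := cofreeLift ρU (pi f)
  have hFD (u : U) : F u ∈ D := hfD (mem_range_self F u)
  have hF : D.subtype ∘ₗ F.codRestrict D hFD = F := subtype_comp_codRestrict _ _ _
  refine ⟨F.codRestrict D hFD, ⟨hD.of_comp_injective D.injective_subtype ?_, fun i => ?_⟩, ?_⟩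
  · rw [hF]
    exact isComodHom_cofreeLift ρU _
  · rw [comp_assoc, hF, comp_assoc, cofreeCounit_comp_cofreeLift, proj_pi]
  · rintro g ⟨hg, hfg⟩
    refine (cancel_left D.injective_subtype).1 (Eq.trans ?_ hF.symm)
    rw [eq_cofreeLift_of_isComodHom (hD.comp hg),
      ← pi_proj_comp (cofreeCounit C _ ∘ₗ D.subtype ∘ₗ g)]
    exact congrArg _ (congrArg pi (funext hfg))

end Coaction

end Product

/-- Let `K` be a field, `C` a coassociative counital `K`-coalgebra and
`(M i)` a family of left `C`-comodules with vector-space product `P = ∀ i, M i` and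
projections `π i`. Consider the cofree comodule `C ⊗ P` (coaction `Δ_C ⊗ id_P`) with
covering map `p = ε_C ⊗ id_P : C ⊗ P → P`, and let `D'` be the sum of all subcomodules
`E ⊆ C ⊗ P` such that each composite `π i ∘ p |_E` is a comodule morphism. Then `D'` is a
subcomodule of `C ⊗ P` and `(D', (π i ∘ p)|_{D'})` is the product of the family in the
category of left `C`-comodules. -/
theorem comodule_product_via_cofree (K : Type u) [Field K] (C : Type v) [AddCommGroup C]
    [Module K C] [Coalgebra K C] {I : Type w} (M : I → Type w')
    [∀ i, AddCommGroup (M i)] [∀ i, Module K (M i)] (σ : ∀ i, Coaction K C (M i)) :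
    -- `p` is the covering map of the cofree comodule over `P = ∀ i, M i`
    let p : (C ⊗[K] (∀ i, M i)) →ₗ[K] (∀ i, M i) :=
      (TensorProduct.lid K (∀ i, M i)).toLinearMap ∘ₗ
        LinearMap.rTensor (∀ i, M i) (Coalgebra.counit (R := K) (A := C))
    ∃ ρW : Coaction K C (C ⊗[K] (∀ i, M i)),
      ρW.ρ = (TensorProduct.assoc K C C (∀ i, M i)).toLinearMap ∘ₗ
        LinearMap.rTensor (∀ i, M i) (Coalgebra.comul (R := K) (A := C)) ∧
      -- `Good E` says `E` is a subcomodule of `C ⊗ P` on which all `π i ∘ p` are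
      -- comodule morphisms; `D'` is the sum of all such subcomodules
      ∀ Good : Submodule K (C ⊗[K] (∀ i, M i)) → Prop,
        (Good = fun E : Submodule K (C ⊗[K] (∀ i, M i)) =>
          ∃ ρE : Coaction K C ↥E, IsComodHom ρE ρW E.subtype ∧
            ∀ i, IsComodHom ρE (σ i) ((LinearMap.proj i ∘ₗ p) ∘ₗ E.subtype)) →
        ∃ ρD : Coaction K C ↥(sSup {E | Good E}),
          IsComodHom ρD ρW (sSup {E | Good E}).subtype ∧
          (∀ i, IsComodHom ρD (σ i)
            ((LinearMap.proj i ∘ₗ p) ∘ₗ (sSup {E | Good E}).subtype)) ∧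
          ∀ (U : Type (max u v w w')) [AddCommGroup U] [Module K U]
            (ρU : Coaction K C U) (f : ∀ i, U →ₗ[K] M i),
            (∀ i, IsComodHom ρU (σ i) (f i)) →
            ∃! g : U →ₗ[K] ↥(sSup {E | Good E}), IsComodHom ρU ρD g ∧
              ∀ i, ((LinearMap.proj i ∘ₗ p) ∘ₗ (sSup {E | Good E}).subtype) ∘ₗ g = f i := by
  intro p
  refine ⟨Coaction.cofree (∀ i, M i), rfl, fun Good hGood => ?_⟩
  replace hGood : Good = (Coaction.cofree (∀ i, M i)).IsCompatibleSubcomodule σ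
      (fun i => LinearMap.proj i ∘ₗ p) := hGood
  subst hGood
  obtain ⟨ρD, hD, hπ⟩ := Coaction.isCompatibleSubcomodule_sSup
    (ρW := Coaction.cofree (∀ i, M i)) (σ := σ) (f := fun i => LinearMap.proj i ∘ₗ p)
  exact ⟨ρD, hD, hπ, fun U _ _ ρU f hf =>
    Coaction.existsUnique_isComodHom_of_range_cofreeLift_le hD
      (le_sSup (Coaction.isCompatibleSubcomodule_range_cofreeLift hf))⟩
end
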